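/- Failure of Kolchin's theorem in positive characteristic: Let k be an algebraically closed field of characteristic p > 0 and let f = x·y^p − z^p ∈ MvPolynomial (Fin 3) k, with the three variables denoted x, y, z (note f is irreducible). Then in the arc algebra A∞((f)): (1) the ideal generated by the images of all the variables y^{(i)} and z^{(i)} (for all i ∈ ℕ) is a minimal prime of A∞((f)) — i.e. the set of arcs lying entirely in the singular locus y = z = 0 is an irreducible component of the arc space — and (2) PrimeSpectrum (A∞((f))) is not an irreducible topological space. -/

import Mathlib

open MvPolynomial

/-- The universal arc `e : k[x_1,…,x_n] → (k[x_j^{(i)}])[[t]]`, sending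
`x_j` to `Σ_{i ≥ 0} x_j^{(i)} t^i`. -/
noncomputable def univArc (k : Type*) [CommRing k] (n : ℕ) :
    MvPolynomial (Fin n) k →ₐ[k] PowerSeries (MvPolynomial (Fin n × ℕ) k) :=
  MvPolynomial.aeval fun j => PowerSeries.mk fun i => MvPolynomial.X (j, i)

/-- The ideal of the arc space of `V(I)`: generated by all `t`-coefficients of `e f`, `f ∈ I`. -/
noncomputable def arcIdeal {k : Type*} [CommRing k] {n : ℕ}
    (I : Ideal (MvPolynomial (Fin n) k)) : Ideal (MvPolynomial (Fin n × ℕ) k) :=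
  Ideal.span {g | ∃ f ∈ I, ∃ i : ℕ, g = PowerSeries.coeff i (univArc k n f)}

/-- The arc algebra `A∞(I)`. -/
noncomputable abbrev ArcAlgebra {k : Type*} [CommRing k] {n : ℕ}
    (I : Ideal (MvPolynomial (Fin n) k)) : Type _ :=
  MvPolynomial (Fin n × ℕ) k ⧸ arcIdeal I

/-- The map `σ : k[x_1,…,x_n] → k[x_j^{(i)}]` recording the initial point of an arc. -/
noncomputable def initialPoint (k : Type*) [CommRing k] (n : ℕ) :
    MvPolynomial (Fin n) k →ₐ[k] MvPolynomial (Fin n × ℕ) k :=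
  MvPolynomial.aeval fun j => MvPolynomial.X (j, 0)

/-!
The ideal `Q = (y⁽ⁱ⁾, z⁽ⁱ⁾)ᵢ` is prime, since killing these variables maps onto a polynomial
ring, and it contains the arc ideal because `f ∈ (y, z)`. For minimality, let `P` be a prime
between the arc ideal and `Q`, and read the generic arc `(a, b, c)` over the domain
`k[x_j^{(i)}] ⧸ P`: it satisfies `a b^p = c^p`, and `a₁ ≠ 0` because `x⁽¹⁾ ∉ Q`. In
characteristic `p` the `t`-coefficient of a `p`-th power vanishes, so the `t`-coefficient of
the relation reads `a₁ b₀^p = 0`; hence `b₀ = c₀ = 0`, and dividing by `t^p` and repeating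
gives `b = c = 0`, i.e. `Q ⊆ P`. The constant arc at the point `(1, 1, 1)` of `V(f)` gives a
prime containing the arc ideal but not `y⁽⁰⁾`, so the nilradical of `A∞((f))` is not prime.
-/

namespace MvPolynomial

variable {σ R : Type*} [CommRing R]

theorem ker_aeval_indicator_compl_X (s : Set σ) :
    RingHom.ker (aeval (sᶜ.indicator X) : MvPolynomial σ R →ₐ[R] MvPolynomial σ R) =
      Ideal.span (X '' s) := by
  set I := Ideal.span (X '' s : Set (MvPolynomial σ R))
  refine le_antisymm (fun g hg => ?_) (Ideal.span_le.mpr ?_)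
  · have hmod : (Ideal.Quotient.mkₐ R I).comp (aeval (sᶜ.indicator X)) =
        Ideal.Quotient.mkₐ R I := by
      refine algHom_ext fun i => ?_
      by_cases hi : i ∈ s
      · have hXi : X i ∈ I := Ideal.subset_span ⟨i, hi, rfl⟩
        simpa [hi] using (Ideal.Quotient.eq_zero_iff_mem.mpr hXi).symm
      · simp [hi]
    have hg' : aeval (sᶜ.indicator X) g = 0 := hg
    have := AlgHom.congr_fun hmod g
    rw [AlgHom.comp_apply, hg', map_zero] at this
    exact Ideal.Quotient.eq_zero_iff_mem.mp this.symm
  · rintro _ ⟨i, hi, rfl⟩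
    simp [hi]

theorem isPrime_span_X_image [IsDomain R] (s : Set σ) :
    (Ideal.span (X '' s : Set (MvPolynomial σ R))).IsPrime := by
  rw [← ker_aeval_indicator_compl_X]
  exact RingHom.ker_isPrime _

theorem X_notMem_span_X_image [Nontrivial R] {s : Set σ} {i : σ} (hi : i ∉ s) :
    (X i : MvPolynomial σ R) ∉ Ideal.span (X '' s) := by
  rw [← ker_aeval_indicator_compl_X]
  simp [hi, X_ne_zero]

end MvPolynomial

namespace Ideal

variable {R : Type*} [CommRing R] {I P Q : Ideal R}

theorem map_quotientMk_mem_minimalPrimes (hP : P ∈ I.minimalPrimes) :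
    P.map (Quotient.mk I) ∈ minimalPrimes (R ⧸ I) := by
  rw [minimalPrimes_eq_comap] at hP
  obtain ⟨P', hP', rfl⟩ := hP
  rwa [map_comap_of_surjective _ Quotient.mk_surjective]

theorem comap_quotientMk_nilradical : (nilradical (R ⧸ I)).comap (Quotient.mk I) = I.radical := by
  rw [nilradical, comap_radical, Submodule.zero_eq_bot, ← RingHom.ker_eq_comap_bot, mk_ker]

theorem not_irreducibleSpace_primeSpectrum_quotient (hP : P ∈ I.minimalPrimes) [hQ : Q.IsPrime]
    (hIQ : I ≤ Q) (hPQ : ¬ P ≤ Q) : ¬ IrreducibleSpace (PrimeSpectrum (R ⧸ I)) := by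
  rw [PrimeSpectrum.irreducibleSpace_iff_isPrime_nilradical]
  intro hnil
  have hrad : I.radical.IsPrime := comap_quotientMk_nilradical (I := I) ▸ hnil.comap _
  have hPrad : P ≤ I.radical := hP.2 ⟨hrad, le_radical⟩ (hP.1.1.radical_le_iff.mpr hP.1.2)
  exact hPQ (hPrad.trans (hQ.radical_le_iff.mpr hIQ))

end Ideal

namespace PowerSeries

variable {D : Type*} [CommRing D] [IsDomain D] {p : ℕ}

theorem X_dvd_of_mul_pow_eq_pow (hp : 0 < p) (hpD : (p : D) = 0) {a b c : PowerSeries D}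
    (ha : coeff 1 a ≠ 0) (h : a * b ^ p = c ^ p) : X ∣ b ∧ X ∣ c := by
  have h1 := congr(coeff 1 $h)
  -- the `t`-coefficient of a `p`-th power is divisible by `p`
  rw [coeff_one_mul, coeff_one_pow, coeff_one_pow, hpD] at h1
  have hb : constantCoeff b = 0 := by
    simpa [ha, hp.ne'] using h1
  have h0 := congr(constantCoeff $h)
  have hc : constantCoeff c = 0 := by
    simpa [hb, hp.ne'] using h0.symm
  exact ⟨X_dvd_iff.mpr hb, X_dvd_iff.mpr hc⟩

theorem eq_zero_of_mul_pow_eq_pow (hp : 0 < p) (hpD : (p : D) = 0) {a b c : PowerSeries D}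
    (ha : coeff 1 a ≠ 0) (h : a * b ^ p = c ^ p) : b = 0 ∧ c = 0 := by
  have hdvd : ∀ m, X ^ m ∣ b ∧ X ^ m ∣ c := by
    intro m
    induction m generalizing b c with
    | zero => simp
    | succ m ih =>
      obtain ⟨⟨b, rfl⟩, ⟨c, rfl⟩⟩ := X_dvd_of_mul_pow_eq_pow hp hpD ha h
      have h' : a * b ^ p = c ^ p := X_pow_mul_cancel (k := p) (by linear_combination h)
      obtain ⟨hb, hc⟩ := ih h'
      rw [pow_succ']
      exact ⟨mul_dvd_mul_left X hb, mul_dvd_mul_left X hc⟩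
  constructor <;> ext m
  · exact X_pow_dvd_iff.mp (hdvd (m + 1)).1 m m.lt_succ_self
  · exact X_pow_dvd_iff.mp (hdvd (m + 1)).2 m m.lt_succ_self

end PowerSeries

section Arcs

variable {k : Type*} [CommRing k] {n : ℕ} {S : Type*} [CommRing S] [Algebra k S]

-- a `k`-algebra map `k[x_j^{(i)}] → S` is the same as an arc over `S`, namely this one
noncomputable def arcOf (φ : MvPolynomial (Fin n × ℕ) k →ₐ[k] S) (j : Fin n) : PowerSeries S :=
  PowerSeries.mk fun i => φ (X (j, i))

theorem map_univArc (φ : MvPolynomial (Fin n × ℕ) k →ₐ[k] S) (f : MvPolynomial (Fin n) k) :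
    PowerSeries.map φ (univArc k n f) = aeval (arcOf φ) f := by
  rw [← PowerSeries.mapAlgHom_apply, ← AlgHom.comp_apply, univArc, comp_aeval]
  rfl

theorem arcIdeal_le_ker_iff (I : Ideal (MvPolynomial (Fin n) k))
    (φ : MvPolynomial (Fin n × ℕ) k →ₐ[k] S) :
    arcIdeal I ≤ RingHom.ker φ ↔ I ≤ RingHom.ker (aeval (arcOf φ)) := by
  rw [arcIdeal, Ideal.span_le]
  simp only [SetLike.le_def, RingHom.mem_ker, ← map_univArc]
  constructor
  · intro h f hf
    ext i
    simpa [PowerSeries.coeff_map] using h ⟨f, hf, i, rfl⟩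
  · rintro h _ ⟨f, hf, i, rfl⟩
    simpa [PowerSeries.coeff_map] using congr(PowerSeries.coeff i $(h hf))

noncomputable def constantArc (c : Fin n → k) : MvPolynomial (Fin n × ℕ) k →ₐ[k] k :=
  aeval fun v => if v.2 = 0 then c v.1 else 0

theorem arcIdeal_le_ker_constantArc {I : Ideal (MvPolynomial (Fin n) k)} {c : Fin n → k}
    (hc : I ≤ RingHom.ker (eval c)) : arcIdeal I ≤ RingHom.ker (constantArc c) := by
  have harc : arcOf (constantArc c) = algebraMap k (PowerSeries k) ∘ c := by
    funext j
    ext i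
    simp [arcOf, constantArc, PowerSeries.coeff_C]
  rw [arcIdeal_le_ker_iff, harc]
  intro f hf
  have hf' : aeval c f = 0 := hc hf
  rw [RingHom.mem_ker, aeval_algebraMap_apply, hf', map_zero]

end Arcs

section KolchinCounterexample

variable (k : Type*) [CommRing k] (p : ℕ)

noncomputable def kolchinPoly : MvPolynomial (Fin 3) k :=
  X 0 * X 1 ^ p - X 2 ^ p

-- the arcs lying in the singular locus `y = z = 0`
noncomputable def singularArcIdeal : Ideal (MvPolynomial (Fin 3 × ℕ) k) :=
  Ideal.span (X '' {v | v.1 ≠ 0})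

variable {k p}

theorem map_singularArcIdeal {T : Type*} [CommRing T] (φ : MvPolynomial (Fin 3 × ℕ) k →+* T) :
    (singularArcIdeal k).map φ =
      Ideal.span {a | ∃ i : ℕ, a = φ (X ((1 : Fin 3), i)) ∨ a = φ (X ((2 : Fin 3), i))} := by
  rw [singularArcIdeal, Ideal.map_span]
  congr 1
  ext a
  simp only [Set.mem_ofPred_eq, Set.image_image, Set.mem_image, Prod.exists]
  constructor
  · rintro ⟨j, i, hj, rfl⟩
    fin_cases j
    exacts [absurd rfl hj, ⟨i, .inl rfl⟩, ⟨i, .inr rfl⟩]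
  · rintro ⟨i, rfl | rfl⟩
    exacts [⟨1, i, by decide, rfl⟩, ⟨2, i, by decide, rfl⟩]

theorem arcIdeal_le_singularArcIdeal (hp : 0 < p) :
    arcIdeal (Ideal.span {kolchinPoly k p}) ≤ singularArcIdeal k := by
  have hzero : (PowerSeries.mk fun _ => 0 : PowerSeries (MvPolynomial (Fin 3 × ℕ) k)) = 0 := by
    ext; simp
  rw [singularArcIdeal, ← ker_aeval_indicator_compl_X, arcIdeal_le_ker_iff,
    Ideal.span_singleton_le_iff_mem, RingHom.mem_ker]
  simp [kolchinPoly, arcOf, hzero, hp.ne']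

theorem singularArcIdeal_le_of_arcIdeal_le (hp : 0 < p) (hpk : (p : k) = 0)
    {P : Ideal (MvPolynomial (Fin 3 × ℕ) k)} [P.IsPrime]
    (hJP : arcIdeal (Ideal.span {kolchinPoly k p}) ≤ P) (hPQ : P ≤ singularArcIdeal k) :
    singularArcIdeal k ≤ P := by
  set φ := Ideal.Quotient.mkₐ k P
  have : Nontrivial k := (algebraMap k (MvPolynomial (Fin 3 × ℕ) k ⧸ P)).domain_nontrivial
  have hrel : arcOf φ 0 * arcOf φ 1 ^ p = arcOf φ 2 ^ p := by
    have hJφ : arcIdeal (Ideal.span {kolchinPoly k p}) ≤ RingHom.ker φ :=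
      fun g hg => Ideal.Quotient.eq_zero_iff_mem.mpr (hJP hg)
    rw [arcIdeal_le_ker_iff, Ideal.span_singleton_le_iff_mem, RingHom.mem_ker] at hJφ
    simpa [kolchinPoly, sub_eq_zero] using hJφ
  have ha : PowerSeries.coeff 1 (arcOf φ 0) ≠ 0 := by
    rw [arcOf, PowerSeries.coeff_mk, Ne, Ideal.Quotient.mkₐ_eq_mk, Ideal.Quotient.eq_zero_iff_mem]
    exact fun h => X_notMem_span_X_image (by simp) (hPQ h)
  have hpD : (p : MvPolynomial (Fin 3 × ℕ) k ⧸ P) = 0 := by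
    rw [← map_natCast (algebraMap k _), hpk, map_zero]
  obtain ⟨hb, hc⟩ := PowerSeries.eq_zero_of_mul_pow_eq_pow hp hpD ha hrel
  rw [singularArcIdeal, Ideal.span_le]
  rintro _ ⟨⟨j, i⟩, hj, rfl⟩
  rw [SetLike.mem_coe, ← Ideal.Quotient.eq_zero_iff_mem]
  change φ (X (j, i)) = 0
  fin_cases j
  · exact absurd rfl hj
  · simpa [arcOf] using congr(PowerSeries.coeff i $hb)
  · simpa [arcOf] using congr(PowerSeries.coeff i $hc)

theorem singularArcIdeal_mem_minimalPrimes [IsDomain k] (hp : 0 < p) (hpk : (p : k) = 0) :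
    singularArcIdeal k ∈ (arcIdeal (Ideal.span {kolchinPoly k p})).minimalPrimes :=
  ⟨⟨isPrime_span_X_image _, arcIdeal_le_singularArcIdeal hp⟩,
    fun _ ⟨_, hJP⟩ hPQ => singularArcIdeal_le_of_arcIdeal_le hp hpk hJP hPQ⟩

end KolchinCounterexample

theorem kolchin_fails_char_p_general (k : Type*) [Field k] (p : ℕ) [CharP k p]
    (hp : 0 < p) (f : MvPolynomial (Fin 3) k)
    (hf : f = MvPolynomial.X 0 * MvPolynomial.X 1 ^ p - MvPolynomial.X 2 ^ p) :
    Ideal.span {a : ArcAlgebra (Ideal.span {f}) | ∃ i : ℕ,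
        a = Ideal.Quotient.mk (arcIdeal (Ideal.span {f})) (MvPolynomial.X ((1 : Fin 3), i)) ∨
        a = Ideal.Quotient.mk (arcIdeal (Ideal.span {f})) (MvPolynomial.X ((2 : Fin 3), i))} ∈
      minimalPrimes (ArcAlgebra (Ideal.span {f})) ∧
    ¬ IrreducibleSpace (PrimeSpectrum (ArcAlgebra (Ideal.span {f}))) := by
  obtain rfl : f = kolchinPoly k p := hf
  have hmin : singularArcIdeal k ∈ (arcIdeal (Ideal.span {kolchinPoly k p})).minimalPrimes :=
    singularArcIdeal_mem_minimalPrimes hp (CharP.cast_eq_zero k p)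
  have : (RingHom.ker (constantArc fun _ : Fin 3 => (1 : k))).IsPrime := RingHom.ker_isPrime _
  refine ⟨?_, Ideal.not_irreducibleSpace_primeSpectrum_quotient
    (Q := RingHom.ker (constantArc fun _ => 1)) hmin (arcIdeal_le_ker_constantArc ?_) fun h => ?_⟩
  · rw [← map_singularArcIdeal]
    exact Ideal.map_quotientMk_mem_minimalPrimes hmin
  · rw [Ideal.span_singleton_le_iff_mem, RingHom.mem_ker]
    simp [kolchinPoly]
  · simpa [constantArc] using h (Ideal.subset_span ⟨((1 : Fin 3), 0), by decide, rfl⟩)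

/-- **Failure of Kolchin's theorem in positive characteristic.**  Let `k` be algebraically
closed of characteristic `p > 0` and `f = x·y^p − z^p ∈ k[x,y,z]` (an irreducible
polynomial).  Then in the arc algebra `A∞((f))`: (1) the ideal generated by the images of
all the variables `y⁽ⁱ⁾` and `z⁽ⁱ⁾` is a minimal prime — the set of arcs lying entirely in
the singular locus `y = z = 0` is an irreducible component of the arc space — and
(2) `Spec A∞((f))` is not an irreducible topological space. -/
theorem kolchin_fails_char_p (k : Type*) [Field k] [IsAlgClosed k] (p : ℕ) [CharP k p]
    (hp : 0 < p) (f : MvPolynomial (Fin 3) k)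
    (hf : f = MvPolynomial.X 0 * MvPolynomial.X 1 ^ p - MvPolynomial.X 2 ^ p) :
    Ideal.span {a : ArcAlgebra (Ideal.span {f}) | ∃ i : ℕ,
        a = Ideal.Quotient.mk (arcIdeal (Ideal.span {f})) (MvPolynomial.X ((1 : Fin 3), i)) ∨
        a = Ideal.Quotient.mk (arcIdeal (Ideal.span {f})) (MvPolynomial.X ((2 : Fin 3), i))} ∈
      minimalPrimes (ArcAlgebra (Ideal.span {f})) ∧
    ¬ IrreducibleSpace (PrimeSpectrum (ArcAlgebra (Ideal.span {f}))) :=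
  kolchin_fails_char_p_general k p hp f hf
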